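/- arXiv:1504.00650 — 3 statements merged into one kernel-verified Lean document; each statement's English description precedes it below -/
import Mathlib

section
/- The Stieltjes transform m_sc of the semicircle law satisfies the self-consistent equation m_sc(z) = −1/(m_sc(z) + z) for all z in the upper half plane. -/
open MeasureTheory Complex

noncomputable def semicircleDensity (x : ℝ) : ℝ := (1 / (2 * Real.pi)) * Real.sqrt (max (4 - x ^ 2) 0)

noncomputable def mSC (z : ℂ) : ℂ := ∫ x : ℝ, (semicircleDensity x : ℂ) / ((x : ℂ) - z)

/-!
Substituting `x = 2 cos θ` gives `m_sc(z) = (2π)⁻¹ ∫₀^π (4 - (2 cos θ)²) / (2 cos θ - z) dθ`.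
Off the real axis `z = a + a⁻¹` with `0 < |a| < 1`, and since `4 - x² = (4 - z²) - (x - z)(x + z)`
only `∫₀^π dθ / (2 cos θ - z)` remains. With `w = e^{iθ}` one has
`2 cos θ - z = w⁻¹ (w - a)(w - a⁻¹)`, so twice this integral is a contour integral over the unit
circle with a single pole inside, at `a`, and Cauchy's formula gives `π / (a - a⁻¹)`.
Hence `m_sc(a + a⁻¹) = -a`, so `m_sc(z) + z = a⁻¹ = -1 / m_sc(z)`.
-/

open Set Metric
open scoped Real

theorem one_lt_norm_inv {𝕜 : Type*} [NormedDivisionRing 𝕜] {a : 𝕜} (ha0 : a ≠ 0) (ha : ‖a‖ < 1) :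
    1 < ‖a⁻¹‖ := by
  rw [norm_inv]
  exact one_lt_inv_iff₀.2 ⟨norm_pos_iff.2 ha0, ha⟩

theorem circleIntegral_inv_sub_mul_inv_sub {c a b : ℂ} {R : ℝ} (ha : a ∈ ball c R)
    (hb : b ∉ closedBall c R) :
    (∮ w in C(c, R), (w - a)⁻¹ * (w - b)⁻¹) = 2 * π * I * (a - b)⁻¹ :=
  ((differentiableOn_id.sub_const b).inv fun _ hw => sub_ne_zero.2 (ne_of_mem_of_not_mem hw hb)
    ).circleIntegral_sub_inv_smul ha

theorem intervalIntegral.integral_zero_two_mul_of_symm {E : Type*} [NormedAddCommGroup E]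
    [NormedSpace ℝ E] {g : ℝ → E} {c : ℝ} (hg : IntervalIntegrable g volume 0 (2 * c))
    (hsymm : ∀ θ, g (2 * c - θ) = g θ) :
    ∫ θ in 0..2 * c, g θ = (2 : ℝ) • ∫ θ in 0..c, g θ := by
  have hc : c ∈ uIcc 0 (2 * c) := by
    rw [mem_uIcc]; rcases le_total 0 c with h | h
    · exact Or.inl ⟨h, by linarith⟩
    · exact Or.inr ⟨by linarith, h⟩
  have hleft : IntervalIntegrable g volume 0 c := hg.mono_set (uIcc_subset_uIcc left_mem_uIcc hc)
  have hright : IntervalIntegrable g volume c (2 * c) :=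
    hg.mono_set (uIcc_subset_uIcc hc right_mem_uIcc)
  have hreflect := intervalIntegral.integral_comp_sub_left g (2 * c) (a := c) (b := 2 * c)
  simp only [hsymm, sub_self, show 2 * c - c = c by ring] at hreflect
  rw [← intervalIntegral.integral_add_adjacent_intervals hleft hright, hreflect, two_smul]

theorem exists_add_inv_eq_of_im_ne_zero {z : ℂ} (hz : z.im ≠ 0) :
    ∃ a : ℂ, a ≠ 0 ∧ ‖a‖ < 1 ∧ a + a⁻¹ = z := by
  obtain ⟨s, hs⟩ := IsAlgClosed.exists_eq_mul_self (z ^ 2 - 4)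
  set c := (z + s) / 2
  have hc : c * c - z * c + 1 = 0 := by simp only [c]; linear_combination (-1 / 4 : ℂ) * hs
  have hc0 : c ≠ 0 := by rintro h; simp [h] at hc
  have hcz : c + c⁻¹ = z := by field_simp; linear_combination hc
  have hnorm : ‖c‖ ≠ 1 := by
    intro h
    apply hz
    rw [← hcz, add_im, inv_im, normSq_eq_norm_sq, h]
    simp
  rcases hnorm.lt_or_gt with h | h
  · exact ⟨c, hc0, h, hcz⟩
  · refine ⟨c⁻¹, inv_ne_zero hc0, ?_, by rw [inv_inv, add_comm, hcz]⟩
    rw [norm_inv]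
    exact inv_lt_one_of_one_lt₀ h

theorem circleMap_sub_mul_circleMap_sub_inv (θ : ℝ) {a : ℂ} (ha : a ≠ 0) :
    (circleMap 0 1 θ - a) * (circleMap 0 1 θ - a⁻¹) =
      circleMap 0 1 θ * (2 * Real.cos θ - (a + a⁻¹)) := by
  have hcos : (2 * Real.cos θ : ℂ) = exp (θ * I) + exp (-(θ * I)) := by
    rw [ofReal_cos, cos]; ring_nf
  have hexp : exp (θ * I) * exp (-(θ * I)) = 1 := by rw [← exp_add]; simp
  rw [circleMap_zero, ofReal_one, one_mul, hcos]
  linear_combination mul_inv_cancel₀ ha - hexp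

theorem two_mul_cos_sub_add_inv_ne_zero (θ : ℝ) {a : ℂ} (ha0 : a ≠ 0) (ha : ‖a‖ < 1) :
    (2 * Real.cos θ : ℂ) - (a + a⁻¹) ≠ 0 := by
  intro h
  have hfactor := circleMap_sub_mul_circleMap_sub_inv θ ha0
  rw [h, mul_zero] at hfactor
  rcases mul_eq_zero.1 hfactor with hw | hw
  · simp [← sub_eq_zero.1 hw] at ha
  · have := one_lt_norm_inv ha0 ha
    simp [← sub_eq_zero.1 hw] at this

theorem integral_zero_two_pi_inv_two_mul_cos_sub_add_inv {a : ℂ} (ha0 : a ≠ 0) (ha : ‖a‖ < 1) :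
    ∫ θ in 0..2 * π, ((2 * Real.cos θ : ℂ) - (a + a⁻¹))⁻¹ = 2 * π * (a - a⁻¹)⁻¹ := by
  have hb : a⁻¹ ∉ closedBall (0 : ℂ) 1 := by
    rw [mem_closedBall_zero_iff, not_le]
    exact one_lt_norm_inv ha0 ha
  have hcauchy := circleIntegral_inv_sub_mul_inv_sub (mem_ball_zero_iff.2 ha) hb
  have hintegrand : ∀ θ : ℝ, deriv (circleMap 0 1) θ •
      ((circleMap 0 1 θ - a)⁻¹ * (circleMap 0 1 θ - a⁻¹)⁻¹) =
      I * ((2 * Real.cos θ : ℂ) - (a + a⁻¹))⁻¹ := by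
    intro θ
    rw [deriv_circleMap, smul_eq_mul, ← mul_inv, circleMap_sub_mul_circleMap_sub_inv θ ha0,
      mul_inv]
    have : circleMap 0 1 θ ≠ 0 := by simp
    field_simp
  rw [circleIntegral, funext hintegrand, intervalIntegral.integral_const_mul] at hcauchy
  exact mul_left_cancel₀ I_ne_zero (by rw [hcauchy]; ring)

theorem integral_zero_pi_inv_two_mul_cos_sub_add_inv {a : ℂ} (ha0 : a ≠ 0) (ha : ‖a‖ < 1) :
    ∫ θ in 0..π, ((2 * Real.cos θ : ℂ) - (a + a⁻¹))⁻¹ = π * (a - a⁻¹)⁻¹ := by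
  have hne := fun θ => two_mul_cos_sub_add_inv_ne_zero θ ha0 ha
  have hfull := integral_zero_two_pi_inv_two_mul_cos_sub_add_inv ha0 ha
  rw [intervalIntegral.integral_zero_two_mul_of_symm
    (Continuous.intervalIntegrable (by fun_prop) _ _) (fun θ => by rw [Real.cos_two_pi_sub]),
    real_smul, ofReal_ofNat] at hfull
  linear_combination hfull / 2

theorem semicircleDensity_two_mul_cos {θ : ℝ} (hθ : θ ∈ Icc 0 π) :
    semicircleDensity (2 * Real.cos θ) = Real.sin θ / π := by
  have hsin : 0 ≤ Real.sin θ := Real.sin_nonneg_of_nonneg_of_le_pi hθ.1 hθ.2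
  have h4 : 4 - (2 * Real.cos θ) ^ 2 = (2 * Real.sin θ) ^ 2 := by
    nlinarith [Real.sin_sq_add_cos_sq θ]
  rw [semicircleDensity, h4, max_eq_left (sq_nonneg _), Real.sqrt_sq (by positivity)]
  field_simp

theorem image_two_mul_cos_Icc : (fun θ => 2 * Real.cos θ) '' Icc 0 π = Icc (-2) 2 := by
  rw [← image_image (2 * ·) Real.cos, Real.bijOn_cos.image_eq,
    image_mul_left_Icc zero_le_two (by norm_num)]
  norm_num

theorem mSC_eq_integral_cos (z : ℂ) :
    mSC z = (2 * π : ℂ)⁻¹ * ∫ θ in 0..π, (4 - (2 * Real.cos θ) ^ 2 : ℂ) / (2 * Real.cos θ - z) := by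
  set g : ℝ → ℂ := fun x => (semicircleDensity x : ℂ) / ((x : ℂ) - z)
  have hsupp : ∀ x ∉ Icc (-2 : ℝ) 2, g x = 0 := by
    intro x hx
    have : 4 - x ^ 2 ≤ 0 := by
      rw [mem_Icc, not_and_or, not_le, not_le] at hx
      rcases hx with hx | hx <;> nlinarith
    simp [g, semicircleDensity, max_eq_right this]
  have hderiv : ∀ θ ∈ Icc 0 π, HasDerivWithinAt (fun θ => 2 * Real.cos θ)
      (-(2 * Real.sin θ)) (Icc 0 π) θ := fun θ _ =>
    by simpa using ((Real.hasDerivAt_cos θ).const_mul 2).hasDerivWithinAt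
  have hinj : InjOn (fun θ => 2 * Real.cos θ) (Icc 0 π) :=
    fun x hx y hy h => Real.injOn_cos hx hy (by simpa using h)
  have hpoint : ∀ θ ∈ Icc 0 π, |-(2 * Real.sin θ)| • g (2 * Real.cos θ) =
      (2 * π : ℂ)⁻¹ * ((4 - (2 * Real.cos θ) ^ 2 : ℂ) / (2 * Real.cos θ - z)) := by
    intro θ hθ
    have hsin : 0 ≤ Real.sin θ := Real.sin_nonneg_of_nonneg_of_le_pi hθ.1 hθ.2
    have hweight : 2 * Real.sin θ * (Real.sin θ / π) = (2 * π)⁻¹ * (4 - (2 * Real.cos θ) ^ 2) := by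
      field_simp
      linear_combination 4 * Real.sin_sq_add_cos_sq θ
    simp only [g]
    rw [abs_neg, abs_of_nonneg (by positivity), real_smul, semicircleDensity_two_mul_cos hθ,
      ← mul_div_assoc, ← ofReal_mul, hweight]
    push_cast
    ring
  rw [mSC, ← setIntegral_eq_integral_of_forall_compl_eq_zero hsupp, ← image_two_mul_cos_Icc,
    integral_image_eq_integral_abs_deriv_smul measurableSet_Icc hderiv hinj,
    setIntegral_congr_fun measurableSet_Icc hpoint, integral_const_mul,
    intervalIntegral.integral_of_le Real.pi_pos.le, integral_Icc_eq_integral_Ioc]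

theorem mSC_add_inv_of_norm_lt_one {a : ℂ} (ha0 : a ≠ 0) (ha : ‖a‖ < 1) : mSC (a + a⁻¹) = -a := by
  have hne := fun θ => two_mul_cos_sub_add_inv_ne_zero θ ha0 ha
  have hsplit : ∀ x z : ℂ, x - z ≠ 0 → (4 - x ^ 2) / (x - z) = (4 - z ^ 2) * (x - z)⁻¹ - (x + z) :=
    fun x z h => by field_simp; ring
  have hdiff : a - a⁻¹ ≠ 0 := by
    intro h
    have := one_lt_norm_inv ha0 ha
    rw [← sub_eq_zero.1 h] at this
    exact lt_asymm ha this
  have hdisc : 4 - (a + a⁻¹) ^ 2 = -(a - a⁻¹) ^ 2 := by field_simp; ring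
  rw [mSC_eq_integral_cos, funext fun θ => hsplit _ _ (hne θ), intervalIntegral.integral_sub,
    intervalIntegral.integral_const_mul, integral_zero_pi_inv_two_mul_cos_sub_add_inv ha0 ha,
    intervalIntegral.integral_add, intervalIntegral.integral_const_mul,
    intervalIntegral.integral_ofReal, integral_cos, intervalIntegral.integral_const, hdisc]
  · simp only [Real.sin_pi, Real.sin_zero, sub_zero, ofReal_zero, mul_zero, zero_add, real_smul]
    field_simp
    ring
  all_goals exact Continuous.intervalIntegrable (by fun_prop) _ _

theorem mSC_self_consistent (z : ℂ) (hz : 0 < z.im) :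
    mSC z = - 1 / (mSC z + z) := by
  obtain ⟨a, ha0, ha, rfl⟩ := exists_add_inv_eq_of_im_ne_zero hz.ne'
  rw [mSC_add_inv_of_norm_lt_one ha0 ha, neg_add_cancel_left, div_inv_eq_mul, neg_one_mul]
end

section
/- Entropy comparison of probabilities: if ν is a probability measure, f ≥ 0 with ∫ f dν = 1, and A is any measurable event, then (f ν)(A) ≤ ν(A) + √(2 S_ν(f)), where S_ν(f) = ∫ f log f dν. -/
/-!
With `klFun u = u log u + 1 - u ≥ 0` one has `S_ν(f) = ∫ klFun ∘ f dν` when `∫ f dν = 1`.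
For `u ≥ 1`, `(u - 1)² ≤ 2u klFun u`, hence by AM-GM `u - 1 ≤ t u + klFun u / (2t)` for
every `t > 0` (trivially so for `u < 1`). Integrating over `A` and then over the whole space
gives `(fν)(A) - ν(A) ≤ t + S_ν(f) / (2t)`, and `t = √(S_ν(f) / 2)` yields `√(2 S_ν(f))`.
-/

open Real MeasureTheory InformationTheory

lemma sq_sub_one_le_two_mul_mul_klFun {u : ℝ} (hu : 1 ≤ u) :
    (u - 1) ^ 2 ≤ 2 * u * klFun u := by
  let G : ℝ → ℝ := fun x => 2 * x * klFun x - (x - 1) ^ 2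
  have hG_deriv : ∀ x, x ≠ 0 → HasDerivAt G (4 * klFun x) x := by
    intro x hx
    refine ((((hasDerivAt_id x).const_mul 2).mul (hasDerivAt_klFun hx)).sub
      (((hasDerivAt_id x).sub_const 1).pow 2)).congr_deriv ?_
    simp only [klFun_apply, id]
    ring
  have hG_mono : MonotoneOn G (Set.Ici 1) := by
    refine monotoneOn_of_hasDerivWithinAt_nonneg (f' := fun x => 4 * klFun x) (convex_Ici 1)
      (by fun_prop (disch := exact continuous_klFun.continuousOn))
      (fun x hx => ?_) (fun x hx => ?_)
    all_goals rw [interior_Ici] at hx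
    · exact (hG_deriv x (by linarith [hx.out])).hasDerivWithinAt
    · exact mul_nonneg zero_le_four (klFun_nonneg (by linarith [hx.out]))
  have := hG_mono Set.self_mem_Ici hu hu
  simp only [G, klFun_one] at this
  linarith

lemma sub_one_le_mul_add_klFun_div {u t : ℝ} (hu : 0 ≤ u) (ht : 0 < t) :
    u - 1 ≤ t * u + klFun u / (2 * t) := by
  rw [← sub_le_iff_le_add', le_div_iff₀ (by positivity)]
  rcases lt_or_ge u 1 with hu1 | hu1
  · exact (mul_nonpos_of_nonpos_of_nonneg (by nlinarith) (by positivity)).trans (klFun_nonneg hu)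
  · -- after multiplying by `2u`, this is `(2tu - (u - 1))² + (2u klFun u - (u - 1)²) ≥ 0`
    nlinarith [sq_sub_one_le_two_mul_mul_klFun hu1, sq_nonneg (2 * t * u - (u - 1))]

lemma le_sqrt_two_mul_of_forall_le_add_div {x S : ℝ} (h : ∀ t > 0, x ≤ t + S / (2 * t)) :
    x ≤ √(2 * S) := by
  rcases le_or_gt S 0 with hS | hS
  · rw [sqrt_eq_zero'.mpr (by linarith)]
    refine le_of_forall_pos_le_add fun ε hε => ?_
    linarith [h ε hε, div_nonpos_of_nonpos_of_nonneg hS (by positivity : 0 ≤ 2 * ε)]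
  · set t := √(S / 2)
    have ht : 0 < t := sqrt_pos.mpr (by positivity)
    have ht_sq : t ^ 2 = S / 2 := sq_sqrt (by positivity)
    have : √(2 * S) = t + S / (2 * t) := by
      rw [show S / (2 * t) = t by field_simp; linarith, show 2 * S = (t + t) ^ 2 by nlinarith]
      exact sqrt_sq (by positivity)
    exact this ▸ h t ht

section

variable {Ω : Type*} [MeasurableSpace Ω] {ν : Measure Ω} {f : Ω → ℝ}

lemma setIntegral_sub_measureReal_le [IsFiniteMeasure ν] (hf_nonneg : ∀ᵐ ω ∂ν, 0 ≤ f ω)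
    (hf_int : Integrable f ν) (hkl_int : Integrable (fun ω => klFun (f ω)) ν) (A : Set Ω)
    {t : ℝ} (ht : 0 < t) :
    ∫ ω in A, f ω ∂ν - ν.real A ≤ t * ∫ ω, f ω ∂ν + (∫ ω, klFun (f ω) ∂ν) / (2 * t) := by
  have hg_int : Integrable (fun ω => t * f ω + klFun (f ω) / (2 * t)) ν :=
    (hf_int.const_mul t).add (hkl_int.div_const _)
  calc ∫ ω in A, f ω ∂ν - ν.real A = ∫ ω in A, (f ω - 1) ∂ν := by
        rw [integral_sub hf_int.integrableOn (integrable_const 1).integrableOn, setIntegral_const,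
          smul_eq_mul, mul_one]
    _ ≤ ∫ ω in A, (t * f ω + klFun (f ω) / (2 * t)) ∂ν :=
        setIntegral_mono_ae (hf_int.sub (integrable_const 1)).integrableOn hg_int.integrableOn
          (hf_nonneg.mono fun ω hω => sub_one_le_mul_add_klFun_div hω ht)
    _ ≤ ∫ ω, (t * f ω + klFun (f ω) / (2 * t)) ∂ν :=
        setIntegral_le_integral hg_int (hf_nonneg.mono fun ω hω => by
          have := klFun_nonneg hω
          positivity)
    _ = t * ∫ ω, f ω ∂ν + (∫ ω, klFun (f ω) ∂ν) / (2 * t) := by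
        rw [integral_add (hf_int.const_mul t) (hkl_int.div_const _), integral_const_mul,
          integral_div]

lemma integral_klFun_eq_integral_mul_log [IsProbabilityMeasure ν] (hf_int : Integrable f ν)
    (hf_one : ∫ ω, f ω ∂ν = 1) (hent_int : Integrable (fun ω => f ω * log (f ω)) ν) :
    ∫ ω, klFun (f ω) ∂ν = ∫ ω, f ω * log (f ω) ∂ν := by
  have h_add_one : Integrable (fun ω => f ω * log (f ω) + 1) ν :=
    hent_int.add (integrable_const 1)
  simp_rw [klFun_apply]
  rw [integral_sub h_add_one hf_int, integral_add hent_int (integrable_const 1), hf_one]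
  simp

end

theorem entropy_probability_comparison_general
    {Ω : Type*} [MeasurableSpace Ω] (ν : Measure Ω) [IsProbabilityMeasure ν]
    (f : Ω → ℝ) (hf_nonneg : ∀ ω, 0 ≤ f ω)
    (hf_int : Integrable f ν) (hf_one : ∫ ω, f ω ∂ν = 1)
    (hent_int : Integrable (fun ω => f ω * Real.log (f ω)) ν)
    (A : Set Ω) :
    ∫ ω in A, f ω ∂ν ≤ (ν A).toReal + Real.sqrt (2 * ∫ ω, f ω * Real.log (f ω) ∂ν) := by
  have hkl_int : Integrable (fun ω => klFun (f ω)) ν :=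
    (hent_int.add (integrable_const 1)).sub hf_int
  rw [← integral_klFun_eq_integral_mul_log hf_int hf_one hent_int, ← measureReal_def,
    ← sub_le_iff_le_add']
  refine le_sqrt_two_mul_of_forall_le_add_div fun t ht => ?_
  simpa [hf_one] using
    setIntegral_sub_measureReal_le (ae_of_all _ hf_nonneg) hf_int hkl_int A ht

theorem entropy_probability_comparison
    {Ω : Type*} [MeasurableSpace Ω] (ν : Measure Ω) [IsProbabilityMeasure ν]
    (f : Ω → ℝ) (hf_meas : Measurable f) (hf_nonneg : ∀ ω, 0 ≤ f ω)
    (hf_int : Integrable f ν) (hf_one : ∫ ω, f ω ∂ν = 1)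
    (hent_int : Integrable (fun ω => f ω * Real.log (f ω)) ν)
    (A : Set Ω) (hA : MeasurableSet A) :
    ∫ ω in A, f ω ∂ν ≤ (ν A).toReal + Real.sqrt (2 * ∫ ω, f ω * Real.log (f ω) ∂ν) :=
  entropy_probability_comparison_general ν f hf_nonneg hf_int hf_one hent_int A
end

section
/- A priori bound on the free-convolution Stieltjes transform: if m : ℂ⁺ → ℂ⁺ satisfies m(z) = ∫ ρ(y) dy / (e^{−t/2} y − z − (1 − e^{−t}) m(z)) for a probability density ρ and some t > 0, then |m(z)| ≤ (1 − e^{−t})^{−1/2} for all z ∈ ℂ⁺. -/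
/-!
Put `w = z + σ m(z)` with `σ = 1 - e^{-t}`, so that `Im w ≥ σ Im m(z) > 0` and `m(z)` is the
Stieltjes transform at `w` of the law of `e^{-t/2} Y`, `Y ~ ρ`. For any probability measure and
`Im w > 0`, `Im ((x - w)⁻¹) = Im w · |x - w|⁻²`, so Jensen's inequality for `|·|²` gives
`|s(w)|² ≤ ∫ |x - w|⁻² = Im s(w) / Im w`. Hence `|m(z)|² ≤ Im m(z) / Im w ≤ 1 / σ`.
-/

open MeasureTheory Complex

theorem Complex.im_inv_ofReal_sub (x : ℝ) (w : ℂ) :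
    ((x : ℂ) - w)⁻¹.im = w.im * ‖((x : ℂ) - w)⁻¹‖ ^ 2 := by
  rw [inv_im, norm_inv, inv_pow, ← normSq_eq_norm_sq]
  simp [div_eq_mul_inv]

theorem Complex.norm_inv_ofReal_sub_le (x : ℝ) {w : ℂ} (hw : 0 < w.im) :
    ‖((x : ℂ) - w)⁻¹‖ ≤ w.im⁻¹ := by
  rw [norm_inv]
  refine inv_anti₀ hw ?_
  simpa using (le_abs_self w.im).trans (by simpa using abs_im_le_norm ((x : ℂ) - w))

theorem Complex.continuous_inv_ofReal_sub {w : ℂ} (hw : 0 < w.im) :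
    Continuous fun x : ℝ => ((x : ℂ) - w)⁻¹ :=
  (continuous_ofReal.sub continuous_const).inv₀ fun x h => by
    simpa [hw.ne'] using congrArg Complex.im h

theorem norm_sq_integral_inv_ofReal_sub_le {α : Type*} [MeasurableSpace α] (μ : Measure α)
    [IsProbabilityMeasure μ] {φ : α → ℝ} (hφ : AEMeasurable φ μ) {w : ℂ} (hw : 0 < w.im) :
    ‖∫ x, ((φ x : ℂ) - w)⁻¹ ∂μ‖ ^ 2 ≤ (∫ x, ((φ x : ℂ) - w)⁻¹ ∂μ).im / w.im := by
  set r : α → ℂ := fun x => ((φ x : ℂ) - w)⁻¹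
  have hr_meas : AEStronglyMeasurable r μ :=
    ((continuous_inv_ofReal_sub hw).measurable.comp_aemeasurable hφ).aestronglyMeasurable
  have hr_int : Integrable r μ :=
    .of_bound hr_meas w.im⁻¹ (.of_forall fun x => norm_inv_ofReal_sub_le _ hw)
  have hr_sq_int : Integrable (fun x => ‖r x‖ ^ 2) μ :=
    .of_bound (hr_meas.norm.pow 2) (w.im⁻¹ ^ 2) (.of_forall fun x => by
      rw [norm_pow, norm_norm]
      exact pow_le_pow_left₀ (norm_nonneg _) (norm_inv_ofReal_sub_le (φ x) hw) 2)
  have jensen : ‖∫ x, r x ∂μ‖ ^ 2 ≤ ∫ x, ‖r x‖ ^ 2 ∂μ :=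
    (convexOn_univ_norm.pow (fun _ _ => norm_nonneg _) 2).map_integral_le
      (continuous_norm.pow 2).continuousOn isClosed_univ (.of_forall fun _ => trivial)
      hr_int hr_sq_int
  have im_integral : (∫ x, r x ∂μ).im = w.im * ∫ x, ‖r x‖ ^ 2 ∂μ := by
    rw [← integral_const_mul, ← RCLike.im_eq_complex_im, ← integral_im hr_int]
    simp only [RCLike.im_eq_complex_im, r, im_inv_ofReal_sub]
  rwa [im_integral, mul_div_cancel_left₀ _ hw.ne']

theorem isProbabilityMeasure_withDensity_ofReal {α : Type*} [MeasurableSpace α] {μ : Measure α}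
    {ρ : α → ℝ} (hρ_nonneg : 0 ≤ᵐ[μ] ρ) (hρ_int : Integrable ρ μ) (hρ_prob : ∫ x, ρ x ∂μ = 1) :
    IsProbabilityMeasure (μ.withDensity fun x => ENNReal.ofReal (ρ x)) := by
  constructor
  rw [withDensity_apply _ MeasurableSet.univ, Measure.restrict_univ,
    ← ofReal_integral_eq_lintegral_ofReal hρ_int hρ_nonneg, hρ_prob, ENNReal.ofReal_one]

theorem integral_withDensity_ofReal {α E : Type*} [MeasurableSpace α] [NormedAddCommGroup E]
    [NormedSpace ℝ E] {μ : Measure α} {ρ : α → ℝ} (hρ_nonneg : 0 ≤ᵐ[μ] ρ)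
    (hρ_meas : AEMeasurable ρ μ) (g : α → E) :
    ∫ x, g x ∂μ.withDensity (fun x => ENNReal.ofReal (ρ x)) = ∫ x, ρ x • g x ∂μ := by
  rw [integral_withDensity_eq_integral_toReal_smul₀ hρ_meas.ennreal_ofReal
    (.of_forall fun _ => ENNReal.ofReal_lt_top)]
  refine integral_congr_ae ?_
  filter_upwards [hρ_nonneg] with x hx
  rw [ENNReal.toReal_ofReal hx]

theorem apriori_bound_free_convolution_stieltjes
    (ρ : ℝ → ℝ) (hρ_nonneg : ∀ y, 0 ≤ ρ y) (hρ_int : Integrable ρ)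
    (hρ_prob : ∫ y : ℝ, ρ y = 1)
    (t : ℝ) (ht : 0 < t)
    (m : ℂ → ℂ)
    (hm_im : ∀ z : ℂ, 0 < z.im → 0 < (m z).im)
    (hm_eq : ∀ z : ℂ, 0 < z.im →
      m z = ∫ y : ℝ, (ρ y : ℂ) /
        ((Real.exp (-t / 2) * y : ℝ) - z - (1 - Real.exp (-t)) * m z)) :
    ∀ z : ℂ, 0 < z.im → ‖m z‖ ≤ (1 - Real.exp (-t)) ^ (-(1 : ℝ) / 2) := by
  intro z hz
  set σ := 1 - Real.exp (-t)
  have hσ : 0 < σ := sub_pos.2 (Real.exp_lt_one_iff.2 (neg_neg_of_pos ht))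
  set μ := volume.withDensity fun y => ENNReal.ofReal (ρ y)
  have : IsProbabilityMeasure μ :=
    isProbabilityMeasure_withDensity_ofReal (.of_forall hρ_nonneg) hρ_int hρ_prob
  set w := z + σ * m z
  have hw_im : w.im = z.im + σ * (m z).im := by simp [w]
  have hw : 0 < w.im := by rw [hw_im]; nlinarith [hm_im z hz]
  have hm_resolvent : m z = ∫ y, (((Real.exp (-t / 2) * y : ℝ) : ℂ) - w)⁻¹ ∂μ := by
    rw [integral_withDensity_ofReal (.of_forall hρ_nonneg) hρ_int.aemeasurable, hm_eq z hz]
    simp only [w, σ, real_smul, div_eq_mul_inv, sub_add_eq_sub_sub, ofReal_sub, ofReal_one]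
  have stieltjes_bound := norm_sq_integral_inv_ofReal_sub_le μ (φ := fun y => Real.exp (-t / 2) * y)
    (by fun_prop) hw
  rw [← hm_resolvent] at stieltjes_bound
  have hm_sq : ‖m z‖ ^ 2 ≤ σ⁻¹ := stieltjes_bound.trans <| by
    rw [div_le_iff₀ hw, hw_im, mul_add, inv_mul_cancel_left₀ hσ.ne']
    linarith [mul_pos (inv_pos.2 hσ) hz]
  rw [neg_div, Real.rpow_neg hσ.le, ← Real.sqrt_eq_rpow, ← Real.sqrt_inv]
  exact Real.le_sqrt_of_sq_le hm_sq
end
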